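/- For every m ≥ 2, every prime p, and every k ≥ 1, every open (equivalently, finite-index) subgroup of SL_m(ℤ_p) contains the kernel of the reduction map SL_m(ℤ_p) → SL_m(ℤ/p^kℤ) for some k; that is, every finite-index subgroup of SL_m(ℤ_p) contains a principal congruence subgroup. -/

import Mathlib

/-!
Let `N` be the normal core of the given finite-index subgroup and `n` its index, so that `N`
contains every `n`-th power. Since `e_ij(t)^n = e_ij(n t)`, `N` contains every transvection
whose entry is divisible by `n`, and the identity
`diag(1 + yz, (1 + yz)⁻¹) = e_ji(-z/(1 + yz)) e_ij(y) e_ji(z) e_ij(-y/(1 + yz))`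
puts into `N` every `diag(v, v⁻¹)` with `n² ∣ v - 1`.
If the kernel of `f : R →+* S` lies in the Jacobson radical, an element of the kernel of
`SL(f)` has unit pivots, so Gaussian elimination column by column writes it as a product of
transvections and matrices `diag(v, v⁻¹)`, all lying in the kernel of `SL(f)`.
Over `ℤ_p` we have `n ∣ p^a` with `a = v_p(n)`, so reduction modulo `p^(2a+1)` does it.
-/

open Matrix

lemma RingHom.isUnit_of_map_eq_one {R S : Type*} [CommRing R] [CommRing S] {f : R →+* S}
    (hf : RingHom.ker f ≤ Ideal.jacobson ⊥) {a : R} (ha : f a = 1) : IsUnit a := by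
  have h := Ideal.mem_jacobson_bot.1
    (hf ((RingHom.sub_mem_ker_iff f).2 (ha.trans f.map_one.symm))) 1
  rwa [mul_one, sub_add_cancel] at h

namespace Matrix.SpecialLinearGroup

variable {ι R S : Type*} [Fintype ι] [DecidableEq ι] [CommRing R] [CommRing S]

lemma transvection_smul {i j : ι} (hij : i ≠ j) (b : R) (w : ι → R) :
    transvection hij b • w = w + (b * w j) • Pi.single i 1 := by
  simp [SpecialLinearGroup.smul_def, transvection_coe, add_mulVec, single_mulVec_eq]

lemma transvection_pow {i j : ι} (hij : i ≠ j) (b : R) (n : ℕ) :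
    transvection hij b ^ n = transvection hij (n • b) := by
  induction n with
  | zero => simp
  | succ n ih => rw [pow_succ, ih, succ_nsmul, transvection_add]

lemma mem_ker_map_iff (f : R →+* S) (x : SpecialLinearGroup ι R) :
    x ∈ (map f).ker ↔ f.mapMatrix (x : Matrix ι ι R) = 1 := by
  rw [MonoidHom.mem_ker]
  exact Subtype.ext_iff

lemma transvection_mem_ker_map (f : R →+* S) {i j : ι} (hij : i ≠ j) {b : R} (hb : f b = 0) :
    transvection hij b ∈ (map f).ker := by
  rw [mem_ker_map_iff, transvection_coe, map_add, map_one]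
  simp [hb]

lemma map_smul_single_apply_of_mem_ker (f : R →+* S) {x : SpecialLinearGroup ι R}
    (hx : x ∈ (map f).ker) (i j : ι) :
    f ((x • Pi.single j 1 : ι → R) i) = (1 : Matrix ι ι S) i j := by
  rw [SpecialLinearGroup.smul_def, smul_eq_mulVec, mulVec_single_one, col_apply,
    ← (mem_ker_map_iff f x).1 hx]
  rfl

def diagPair {i j : ι} (hij : i ≠ j) (v : Rˣ) : SpecialLinearGroup ι R :=
  ⟨diagonal fun k ↦ if k = i then (v : R) else if k = j then ↑v⁻¹ else 1, by
    rw [det_diagonal, ← Finset.prod_erase_mul _ _ (Finset.mem_univ i),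
      ← Finset.prod_erase_mul _ _ (Finset.mem_erase.2 ⟨hij.symm, Finset.mem_univ j⟩),
      Finset.prod_eq_one fun k hk ↦ by simp_all]
    simp [hij.symm]⟩

lemma diagPair_smul_single {i j : ι} (hij : i ≠ j) (v : Rˣ) (k : ι) :
    diagPair hij v • (Pi.single k 1 : ι → R) =
      (if k = i then (v : R) else if k = j then ↑v⁻¹ else 1) • Pi.single k 1 := by
  rw [SpecialLinearGroup.smul_def, ← Pi.single_smul', smul_eq_mul, mul_one]
  exact (diagonal_mulVec_single _ _ _).trans (by rw [mul_one])

lemma diagPair_mem_ker_map (f : R →+* S) {i j : ι} (hij : i ≠ j) {v : Rˣ} (hv : f v = 1) :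
    diagPair hij v ∈ (map f).ker := by
  have hv' : f ↑v⁻¹ = 1 := by rw [← map_one f, ← Units.inv_mul v, map_mul, hv, mul_one]
  rw [mem_ker_map_iff, diagPair, RingHom.mapMatrix_apply, diagonal_map (map_zero f)]
  convert diagonal_one with k
  split_ifs <;> simp [hv, hv']

lemma diagPair_eq_transvection_mul {i j : ι} (hij : i ≠ j) {v : Rˣ} {y z : R}
    (hv : (v : R) = 1 + y * z) :
    diagPair hij v = transvection hij.symm (-(z * ↑v⁻¹)) * transvection hij y *
      transvection hij.symm z * transvection hij (-(y * ↑v⁻¹)) := by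
  have hw : (1 + y * z) * ↑v⁻¹ = 1 := by rw [← hv, Units.mul_inv]
  have hentry (c : R) (a b : ι) :
      Matrix.transvection j i c a b = if a = b then 1 else if a = j ∧ b = i then c else 0 := by
    simp [Matrix.transvection, one_apply, single_apply]
    grind
  apply Subtype.ext
  simp only [SpecialLinearGroup.coe_mul, Matrix.mul_assoc]
  change diagonal _ = Matrix.transvection j i _ * (Matrix.transvection i j y *
    (Matrix.transvection j i z * Matrix.transvection i j _))
  ext a b
  by_cases haj : a = j <;> by_cases hai : a = i <;> by_cases hbj : b = j <;>
    by_cases hbi : b = i <;>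
    simp [diagonal_apply, transvection_mul_apply_of_ne, hentry, hij, hij.symm, haj, hai, hbj,
      hbi] <;>
    grind

lemma eq_one_of_smul_single_eq_smul {x : SpecialLinearGroup ι R} {c : ι} {a : R}
    (hxc : x • Pi.single c 1 = a • (Pi.single c 1 : ι → R))
    (hx : ∀ j ≠ c, x • (Pi.single j 1 : ι → R) = Pi.single j 1) : a = 1 := by
  have hdiag : (x : Matrix ι ι R) = diagonal (Function.update 1 c a) := by
    refine ext_of_mulVec_single fun j ↦ ?_
    rw [diagonal_mulVec_single, ← smul_eq_mulVec, ← SpecialLinearGroup.smul_def]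
    by_cases hjc : j = c
    · subst hjc
      rw [hxc, Function.update_self, ← Pi.single_smul', smul_eq_mul]
    · rw [hx j hjc, Function.update_of_ne hjc, Pi.one_apply, one_mul]
  simpa [hdiag, det_diagonal, Finset.prod_update_of_mem (Finset.mem_univ c)] using x.2

variable (f : R →+* S) {H : Subgroup (SpecialLinearGroup ι R)}

lemma exists_mem_smul_single_eq
    (hT : ∀ (i j : ι) (hij : i ≠ j) (t : R), f t = 0 → transvection hij t ∈ H)
    {c : ι} {v : ι → R} (hvc : v c = 1) (hv : ∀ i ≠ c, f (v i) = 0) :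
    ∃ g ∈ H, g • Pi.single c 1 = v ∧
      ∀ j ≠ c, g • (Pi.single j 1 : ι → R) = Pi.single j 1 := by
  have hs : ∀ i ∉ (Finset.univ : Finset ι), i ≠ c → v i = 0 := by simp
  generalize (Finset.univ : Finset ι) = s at hs
  induction s using Finset.induction_on generalizing v with
  | empty =>
    refine ⟨1, H.one_mem, ?_, fun j _ ↦ one_smul _ _⟩
    ext i
    by_cases hi : i = c
    · simp [hi, hvc]
    · simp [hi, hs i (Finset.notMem_empty i) hi]
  | insert a s ha ih =>
    by_cases hac : a = c
    · exact ih hvc hv fun i hi hic ↦ hs i (by simp [hi, hac ▸ hic]) hic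
    obtain ⟨g, hgH, hgc, hgj⟩ := ih (v := Function.update v a 0) (by simp [Ne.symm hac, hvc])
      (fun i hi ↦ by by_cases hia : i = a <;> simp [hia, hv i hi])
      (fun i hi hic ↦ by by_cases hia : i = a <;> simp_all)
    refine ⟨transvection hac (v a) * g, H.mul_mem (hT a c hac _ (hv a hac)) hgH, ?_,
      fun j hj ↦ ?_⟩
    · rw [mul_smul, hgc, transvection_smul]
      ext i
      by_cases hia : i = a <;> simp [hia, Ne.symm hac, hvc]
    · rw [mul_smul, hgj j hj, transvection_smul]
      simp [hj.symm]

lemma exists_mem_inv_mul_smul_single_eq (hf : RingHom.ker f ≤ Ideal.jacobson ⊥)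
    (hT : ∀ (i j : ι) (hij : i ≠ j) (t : R), f t = 0 → transvection hij t ∈ H)
    (hD : ∀ (i j : ι) (hij : i ≠ j) (v : Rˣ), f v = 1 → diagPair hij v ∈ H)
    {x : SpecialLinearGroup ι R} (hx : x ∈ (map f).ker) {c : ι} {u : Finset ι} (hc : c ∉ u)
    (hfix : ∀ j ∉ insert c u, x • (Pi.single j 1 : ι → R) = Pi.single j 1) :
    ∃ h ∈ H, ∀ j ∉ u, (h⁻¹ * x) • (Pi.single j 1 : ι → R) = Pi.single j 1 := by
  obtain ⟨w, hw⟩ : IsUnit ((x • Pi.single c 1 : ι → R) c) :=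
    f.isUnit_of_map_eq_one hf (by simp [map_smul_single_apply_of_mem_ker f hx])
  obtain ⟨g, hgH, hgc, hgj⟩ := exists_mem_smul_single_eq f hT (c := c)
    (v := (↑w⁻¹ : R) • (x • (Pi.single c 1 : ι → R))) (by simp [← hw])
    (fun i hi ↦ by simp [map_smul_single_apply_of_mem_ker f hx, hi])
  have hyc : (g⁻¹ * x) • Pi.single c 1 = (w : R) • (Pi.single c 1 : ι → R) := by
    rw [mul_smul, inv_smul_eq_iff, smul_comm, hgc]
    simp [smul_smul]
  have hyj : ∀ j ∉ insert c u, (g⁻¹ * x) • (Pi.single j 1 : ι → R) = Pi.single j 1 := by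
    intro j hj
    rw [mul_smul, hfix j hj, inv_smul_eq_iff, hgj j (by grind)]
  obtain ⟨d, hdH, hdc, hdj⟩ : ∃ d ∈ H,
      d • Pi.single c 1 = (w : R) • (Pi.single c 1 : ι → R) ∧
      ∀ j ∉ insert c u, d • (Pi.single j 1 : ι → R) = Pi.single j 1 := by
    -- in the last column the pivot is `1` by the determinant; otherwise rescale against `c' ∈ u`
    rcases u.eq_empty_or_nonempty with rfl | ⟨c', hc'⟩
    · refine ⟨1, H.one_mem, ?_, fun j _ ↦ one_smul _ _⟩
      rw [eq_one_of_smul_single_eq_smul hyc fun j hj ↦ hyj j (by simpa using hj), one_smul,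
        one_smul]
    · have hcc' : c ≠ c' := fun h ↦ hc (h ▸ hc')
      refine ⟨diagPair hcc' w, hD c c' hcc' w ?_, by simp [diagPair_smul_single], ?_⟩
      · rw [hw, map_smul_single_apply_of_mem_ker f hx, one_apply_eq]
      · intro j hj
        rw [diagPair_smul_single, if_neg (by grind), if_neg (by grind), one_smul]
  refine ⟨g * d, H.mul_mem hgH hdH, fun j hj ↦ ?_⟩
  rw [_root_.mul_inv_rev, mul_assoc, mul_smul, inv_smul_eq_iff]
  by_cases hjc : j = c
  · rw [hjc, hyc, hdc]
  · rw [hyj j (by simp [hjc, hj]), hdj j (by simp [hjc, hj])]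

theorem ker_map_le_of_transvection_mem_of_diagPair_mem (hf : RingHom.ker f ≤ Ideal.jacobson ⊥)
    (hT : ∀ (i j : ι) (hij : i ≠ j) (t : R), f t = 0 → transvection hij t ∈ H)
    (hD : ∀ (i j : ι) (hij : i ≠ j) (v : Rˣ), f v = 1 → diagPair hij v ∈ H) :
    (map f).ker ≤ H := by
  have hT' (i j : ι) (hij : i ≠ j) (t : R) (ht : f t = 0) :
      transvection hij t ∈ H ⊓ (map f).ker :=
    ⟨hT i j hij t ht, transvection_mem_ker_map f hij ht⟩
  have hD' (i j : ι) (hij : i ≠ j) (v : Rˣ) (hv : f v = 1) :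
      diagPair hij v ∈ H ⊓ (map f).ker :=
    ⟨hD i j hij v hv, diagPair_mem_ker_map f hij hv⟩
  suffices key : ∀ (u : Finset ι), ∀ x ∈ (map f).ker,
      (∀ j ∉ u, x • (Pi.single j 1 : ι → R) = Pi.single j 1) →
      x ∈ H ⊓ (map f).ker from
    fun x hx ↦ (key Finset.univ x hx (by simp)).1
  intro u
  induction u using Finset.induction_on with
  | empty =>
    intro x _ hx
    have hx1 : x = 1 := Subtype.ext <| ext_of_mulVec_single fun j ↦ by
      rw [coe_one, one_mulVec, ← smul_eq_mulVec, ← SpecialLinearGroup.smul_def]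
      exact hx j (Finset.notMem_empty j)
    exact hx1 ▸ Subgroup.one_mem _
  | insert c u hc ih =>
    intro x hx hfix
    obtain ⟨h, hh, hhx⟩ := exists_mem_inv_mul_smul_single_eq f hf hT' hD' hx hc hfix
    have hy := ih (h⁻¹ * x) (Subgroup.mul_mem _ (Subgroup.inv_mem _ hh.2) hx) hhx
    simpa using Subgroup.mul_mem _ hh hy

variable {N : Subgroup (SpecialLinearGroup ι R)} [N.Normal]

lemma transvection_mem_of_index_dvd {i j : ι} (hij : i ≠ j) {t : R} (ht : (N.index : R) ∣ t) :
    transvection hij t ∈ N := by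
  obtain ⟨s, rfl⟩ := ht
  rw [← nsmul_eq_mul, ← transvection_pow]
  exact N.pow_index_mem _

lemma diagPair_mem_of_index_sq_dvd {i j : ι} (hij : i ≠ j) {v : Rˣ}
    (hv : (N.index : R) ^ 2 ∣ (v : R) - 1) : diagPair hij v ∈ N := by
  obtain ⟨s, hs⟩ := hv
  rw [diagPair_eq_transvection_mul hij (y := (N.index : R)) (z := N.index * s)
    (by linear_combination hs)]
  refine N.mul_mem (N.mul_mem (N.mul_mem ?_ ?_) ?_) ?_ <;> apply transvection_mem_of_index_dvd
  · exact ((dvd_mul_right _ _).mul_right _).neg_right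
  · exact dvd_rfl
  · exact dvd_mul_right _ _
  · exact (dvd_mul_right _ _).neg_right

theorem ker_map_le_of_index_sq_dvd (hf : RingHom.ker f ≤ Ideal.jacobson ⊥)
    (hN : ∀ t, f t = 0 → (N.index : R) ^ 2 ∣ t) : (map f).ker ≤ N :=
  ker_map_le_of_transvection_mem_of_diagPair_mem f hf
    (fun _ _ hij t ht ↦ transvection_mem_of_index_dvd hij
      ((dvd_pow_self _ two_ne_zero).trans (hN t ht)))
    (fun _ _ hij v hv ↦ diagPair_mem_of_index_sq_dvd hij
      (hN _ (by rw [map_sub, hv, map_one, sub_self])))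

end Matrix.SpecialLinearGroup

namespace PadicInt

variable {p : ℕ} [Fact p.Prime]

lemma dvd_p_pow_valuation {x : ℤ_[p]} (hx : x ≠ 0) : x ∣ (p : ℤ_[p]) ^ x.valuation :=
  Units.dvd_mul_left.1 (dvd_of_eq (unitCoeff_spec hx))

lemma ker_toZModPow_le_jacobson {k : ℕ} (hk : k ≠ 0) :
    RingHom.ker (toZModPow k : ℤ_[p] →+* ZMod (p ^ k)) ≤ Ideal.jacobson ⊥ := by
  rw [ker_toZModPow, IsLocalRing.jacobson_eq_maximalIdeal ⊥ bot_ne_top, maximalIdeal_eq_span_p,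
    Ideal.span_singleton_le_span_singleton]
  exact dvd_pow_self _ hk

end PadicInt

theorem finiteIndex_subgroup_contains_principal_congruence_subgroup_general
    (p : ℕ) [Fact p.Prime] (m : ℕ)
    (K : Subgroup (Matrix.SpecialLinearGroup (Fin m) ℤ_[p])) (hK : K.FiniteIndex) :
    ∃ k : ℕ, 1 ≤ k ∧
      (Matrix.SpecialLinearGroup.map (n := Fin m) (PadicInt.toZModPow (p := p) k)).ker ≤ K := by
  set N := K.normalCore
  have hn : (N.index : ℤ_[p]) ≠ 0 := Nat.cast_ne_zero.2 N.index_ne_zero_of_finite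
  set a := (N.index : ℤ_[p]).valuation
  refine ⟨2 * a + 1, by omega, le_trans ?_ K.normalCore_le⟩
  refine SpecialLinearGroup.ker_map_le_of_index_sq_dvd _
    (PadicInt.ker_toZModPow_le_jacobson (by omega)) fun t ht ↦ ?_
  rw [← RingHom.mem_ker, PadicInt.ker_toZModPow, Ideal.mem_span_singleton] at ht
  calc (N.index : ℤ_[p]) ^ 2 ∣ ((p : ℤ_[p]) ^ a) ^ 2 :=
        pow_dvd_pow_of_dvd (PadicInt.dvd_p_pow_valuation hn) 2
    _ ∣ (p : ℤ_[p]) ^ (2 * a + 1) := by rw [← pow_mul]; exact pow_dvd_pow _ (by omega)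
    _ ∣ t := ht

/-- Every finite-index subgroup of `SL_m(ℤ_p)` contains a principal congruence subgroup,
i.e. the kernel of the reduction map `SL_m(ℤ_p) → SL_m(ℤ/p^kℤ)` for some `k`. -/
theorem finiteIndex_subgroup_contains_principal_congruence_subgroup
    (p : ℕ) [Fact p.Prime] (m : ℕ) (hm : 2 ≤ m)
    (K : Subgroup (Matrix.SpecialLinearGroup (Fin m) ℤ_[p])) (hK : K.FiniteIndex) :
    ∃ k : ℕ, 1 ≤ k ∧
      (Matrix.SpecialLinearGroup.map (n := Fin m) (PadicInt.toZModPow (p := p) k)).ker ≤ K :=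
  finiteIndex_subgroup_contains_principal_congruence_subgroup_general p m K hK
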